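/- arXiv:1512.01829 — 2 statements merged into one kernel-verified Lean document; each statement's English description precedes it below -/
import Mathlib

section
/- Let (G, k, (V^i)_{i=1}^k) be a Multicolored Clique instance with |V^i| = n for every i and n, k ≥ 2, and let H be the graph produced by the reduction. Then the treedepth of H satisfies td(H) ≤ C(k,2) + k + 3, where C(k,2) = k(k−1)/2; in particular td(H) = O(k^2). -/
open SimpleGraph Finset
open scoped Classical

namespace Paper

noncomputable section

variable {V : Type} [Fintype V] [DecidableEq V] {τ : Type} [Fintype τ]

/-! ### Multicommodity flows as weighted path systems -/

/-- Total amount of flow sent on paths from `u` to `v`. -/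
def pairFlow {G : SimpleGraph V} (f : ∀ u v : V, G.Path u v → ℝ) (u v : V) : ℝ :=
  ∑ p : G.Path u v, f u v p

/-- Total amount of flow on paths using the edge `e`. -/
def edgeLoad {G : SimpleGraph V} (f : ∀ u v : V, G.Path u v → ℝ) (e : Sym2 V) : ℝ :=
  ∑ u, ∑ v, ∑ p : G.Path u v, if e ∈ (p : G.Walk u v).edges then f u v p else 0

/-- Total amount of flow on paths using the vertex `w`. -/
def vertLoad {G : SimpleGraph V} (f : ∀ u v : V, G.Path u v → ℝ) (w : V) : ℝ :=
  ∑ u, ∑ v, ∑ p : G.Path u v, if w ∈ (p : G.Walk u v).support then f u v p else 0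

/-- The marginal of `z`: the total amount of flow routed for `z`,
i.e. on paths having `z` as an endpoint. -/
def margOf {G : SimpleGraph V} (f : ∀ u v : V, G.Path u v → ℝ) (z : V) : ℝ :=
  (∑ v, pairFlow f z v) + ∑ u, pairFlow f u z

/-- The total value `|f|` of a multicommodity flow for the pairs `M`. -/
def valueOf {G : SimpleGraph V} (f : ∀ u v : V, G.Path u v → ℝ) (M : Finset (V × V)) : ℝ :=
  ∑ m ∈ M, pairFlow f m.1 m.2

/-- The pairs `M` form a matching on the terminals: all the endpoints are distinct. -/
def PairsMatching (M : Finset (V × V)) : Prop :=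
  (∀ m ∈ M, m.1 ≠ m.2) ∧
    ∀ m ∈ M, ∀ m' ∈ M, m ≠ m' →
      m.1 ≠ m'.1 ∧ m.1 ≠ m'.2 ∧ m.2 ≠ m'.1 ∧ m.2 ≠ m'.2

/-- `v` is a terminal of the collection of pairs `M`. -/
def Terminal (M : Finset (V × V)) (v : V) : Prop :=
  ∃ m ∈ M, m.1 = v ∨ m.2 = v

/-- A feasible fractional solution `(f, x)` to the multicommodity flow relaxation
`EDP-LP` of MaxEDP (edge capacities): nonnegative flow between the pairs of `M` only,
routing `x_i ≤ 1` for each pair, satisfying the edge capacities.  The marginals `x`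
are recovered as `pairFlow f` and `margOf f`. -/
structure EDPFlow (G : SimpleGraph V) (cap : Sym2 V → ℕ) (M : Finset (V × V)) where
  f : ∀ u v : V, G.Path u v → ℝ
  nonneg : ∀ u v p, 0 ≤ f u v p
  supp : ∀ u v, (u, v) ∉ M → ∀ p, f u v p = 0
  le_one : ∀ m ∈ M, pairFlow f m.1 m.2 ≤ 1
  feas : ∀ e : Sym2 V, edgeLoad f e ≤ (cap e : ℝ)

def EDPFlow.value {G : SimpleGraph V} {cap : Sym2 V → ℕ} {M : Finset (V × V)}
    (F : EDPFlow G cap M) : ℝ := valueOf F.f M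

def EDPFlow.marg {G : SimpleGraph V} {cap : Sym2 V → ℕ} {M : Finset (V × V)}
    (F : EDPFlow G cap M) (z : V) : ℝ := margOf F.f z

/-- A feasible fractional solution to the multicommodity flow relaxation of
MaxNDP (node capacities). -/
structure NDPFlow (G : SimpleGraph V) (cap : V → ℕ) (M : Finset (V × V)) where
  f : ∀ u v : V, G.Path u v → ℝ
  nonneg : ∀ u v p, 0 ≤ f u v p
  supp : ∀ u v, (u, v) ∉ M → ∀ p, f u v p = 0
  le_one : ∀ m ∈ M, pairFlow f m.1 m.2 ≤ 1
  feas : ∀ w : V, vertLoad f w ≤ (cap w : ℝ)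

def NDPFlow.value {G : SimpleGraph V} {cap : V → ℕ} {M : Finset (V × V)}
    (F : NDPFlow G cap M) : ℝ := valueOf F.f M

def NDPFlow.marg {G : SimpleGraph V} {cap : V → ℕ} {M : Finset (V × V)}
    (F : NDPFlow G cap M) (z : V) : ℝ := margOf F.f z

/-- There is a feasible integral routing (with congestion `con`) of at least `q`
of the pairs of `M`, subject to edge capacities: a subset `R ⊆ M` of size at least `q`
together with a choice of a path for each pair of `R` such that every edge `e`
is on at most `con * cap e` of the chosen paths. -/
def HasEDPRouting (G : SimpleGraph V) (cap : Sym2 V → ℕ) (M : Finset (V × V))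
    (con : ℕ) (q : ℝ) : Prop :=
  ∃ (R : Finset (V × V)) (route : ∀ m ∈ R, G.Path m.1 m.2),
    R ⊆ M ∧ q ≤ (R.card : ℝ) ∧
      ∀ e : Sym2 V,
        (R.attach.filter fun m => e ∈ (route m.1 m.2).val.edges).card ≤ con * cap e

/-- There is a feasible integral routing (with congestion `con`) of at least `q`
of the pairs of `M`, subject to node capacities. -/
def HasNDPRouting (G : SimpleGraph V) (cap : V → ℕ) (M : Finset (V × V))
    (con : ℕ) (q : ℝ) : Prop :=
  ∃ (R : Finset (V × V)) (route : ∀ m ∈ R, G.Path m.1 m.2),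
    R ⊆ M ∧ q ≤ (R.card : ℝ) ∧
      ∀ w : V,
        (R.attach.filter fun m => w ∈ (route m.1 m.2).val.support).card ≤ con * cap w

/-! ### Induced subgraphs on vertex subsets -/

/-- The subgraph of `G` induced on `U` (as a graph on the same vertex set, with all
vertices outside `U` isolated). -/
def restrictG (G : SimpleGraph V) (U : Set V) : SimpleGraph V where
  Adj u v := u ∈ U ∧ v ∈ U ∧ G.Adj u v
  symm := ⟨fun u v h => ⟨h.2.1, h.1, h.2.2.symm⟩⟩
  loopless := ⟨fun v h => G.loopless.irrefl v h.2.2⟩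

lemma restrictG_le (G : SimpleGraph V) (U : Set V) : restrictG G U ≤ G :=
  fun _ _ h => h.2.2

/-- Push a path along a subgraph inclusion. -/
def pathMapLe {G G' : SimpleGraph V} (h : G ≤ G') {u v : V} (p : G.Path u v) :
    G'.Path u v :=
  ⟨(p : G.Walk u v).mapLe h, (SimpleGraph.Walk.mapLe_isPath h).mpr p.prop⟩

/-- The vertex set `s` is (nonempty and) connected in `G`. -/
def ConnOn (G : SimpleGraph V) (s : Finset V) : Prop :=
  s.Nonempty ∧ ∀ u ∈ s, ∀ v ∈ s, (restrictG G ↑s).Reachable u v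

/-! ### Rooted tree decompositions -/

/-- The parent adhesion `σ(t) = β(t) ∩ β(parent t)` (empty at the root). -/
def sigmaOf (parent : τ → τ) (root : τ) (bag : τ → Finset V) (t : τ) : Finset V :=
  if t = root then ∅ else bag t ∩ bag (parent t)

/-- `γ(t)`: the union of the bags at the descendants of `t`. -/
def gammaOf (parent : τ → τ) (bag : τ → Finset V) (t : τ) : Finset V :=
  Finset.univ.filter fun v => ∃ s, (∃ n, parent^[n] s = t) ∧ v ∈ bag s

/-- A rooted tree decomposition of `G`, encoded by the parent map of the rooted
tree on the node set `τ`.  The last two axioms state that for every vertex `v` the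
set of nodes whose bag contains `v` is connected in the tree (it is closed under
taking intermediate ancestors, and any two such nodes have a common ancestor
whose bag still contains `v`). -/
structure TreeDecomp (τ : Type) [Fintype τ] {V : Type} [Fintype V] [DecidableEq V]
    (G : SimpleGraph V) where
  root : τ
  parent : τ → τ
  parent_root : parent root = root
  reach_root : ∀ t : τ, ∃ n : ℕ, parent^[n] t = root
  bag : τ → Finset V
  edge_in_bag : ∀ u v : V, G.Adj u v → ∃ t, u ∈ bag t ∧ v ∈ bag t
  vert_in_bag : ∀ v : V, ∃ t, v ∈ bag t
  interval : ∀ (v : V) (t : τ) (m n : ℕ), m ≤ n → v ∈ bag t → v ∈ bag (parent^[n] t) →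
    v ∈ bag (parent^[m] t)
  meet : ∀ (v : V) (t s : τ), v ∈ bag t → v ∈ bag s →
    ∃ m n : ℕ, parent^[m] t = parent^[n] s ∧ v ∈ bag (parent^[m] t)

variable {G : SimpleGraph V}

/-- The tree of the decomposition is a path rooted at one of its endpoints:
every node has at most one child. -/
def TreeDecomp.IsPathDecomp (D : TreeDecomp τ G) : Prop :=
  ∀ t s : τ, D.parent t = D.parent s → t ≠ D.parent t → s ≠ D.parent s → t = s

def TreeDecomp.sigma (D : TreeDecomp τ G) (t : τ) : Finset V :=
  sigmaOf D.parent D.root D.bag t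

def TreeDecomp.gamma (D : TreeDecomp τ G) (t : τ) : Finset V :=
  gammaOf D.parent D.bag t

def TreeDecomp.alpha (D : TreeDecomp τ G) (t : τ) : Finset V :=
  D.gamma t \ D.sigma t

/-- The graph `G(t) = G[γ(t)] − E(G[σ(t)])`. -/
def TreeDecomp.Gt (D : TreeDecomp τ G) (t : τ) : SimpleGraph V where
  Adj u v := G.Adj u v ∧ u ∈ D.gamma t ∧ v ∈ D.gamma t ∧ ¬(u ∈ D.sigma t ∧ v ∈ D.sigma t)
  symm := ⟨fun u v h => ⟨h.1.symm, h.2.2.1, h.2.1, fun hc => h.2.2.2 ⟨hc.2, hc.1⟩⟩⟩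
  loopless := ⟨fun v h => G.loopless.irrefl v h.1⟩

/-! ### Flows to a set of vertices -/

/-- A feasible (edge-capacitated) flow in `H` whose flow paths all end in `S`. -/
structure EFlowToSet (H : SimpleGraph V) (cap : Sym2 V → ℕ) (S : Finset V) where
  g : ∀ u v : V, H.Path u v → ℝ
  nonneg : ∀ u v p, 0 ≤ g u v p
  ends : ∀ u v p, g u v p ≠ 0 → v ∈ S
  feas : ∀ e : Sym2 V, edgeLoad g e ≤ (cap e : ℝ)

/-- The amount of flow routed from `z` (to the target set). -/
def EFlowToSet.fromAmt {H : SimpleGraph V} {cap : Sym2 V → ℕ} {S : Finset V}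
    (F : EFlowToSet H cap S) (z : V) : ℝ :=
  ∑ v, pairFlow F.g z v

/-- A feasible (node-capacitated) flow in `H` whose flow paths all end in `S`. -/
structure NFlowToSet (H : SimpleGraph V) (cap : V → ℕ) (S : Finset V) where
  g : ∀ u v : V, H.Path u v → ℝ
  nonneg : ∀ u v p, 0 ≤ g u v p
  ends : ∀ u v p, g u v p ≠ 0 → v ∈ S
  feas : ∀ w : V, vertLoad g w ≤ (cap w : ℝ)

def NFlowToSet.fromAmt {H : SimpleGraph V} {cap : V → ℕ} {S : Finset V}
    (F : NFlowToSet H cap S) (z : V) : ℝ :=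
  ∑ v, pairFlow F.g z v

/-! ### Safe and good nodes -/

/-- A node `t` is safe w.r.t. an (edge-capacitated) fractional solution `F` if some
feasible flow in `G(t)` routes at least `x(z)/(4r)` from every `z ∈ γ(t)` to `σ(t)`. -/
def ESafe {M : Finset (V × V)} (cap : Sym2 V → ℕ) (D : TreeDecomp τ G) (r : ℕ)
    (F : EDPFlow G cap M) (t : τ) : Prop :=
  ∃ gf : EFlowToSet (D.Gt t) cap (D.sigma t),
    ∀ z ∈ D.gamma t, F.marg z / (4 * (r : ℝ)) ≤ gf.fromAmt z

/-- A node `t` is safe w.r.t. a node-capacitated fractional solution `F`. -/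
def NSafe {M : Finset (V × V)} (cap : V → ℕ) (D : TreeDecomp τ G) (r : ℕ)
    (F : NDPFlow G cap M) (t : τ) : Prop :=
  ∃ gf : NFlowToSet (D.Gt t) cap (D.sigma t),
    ∀ z ∈ D.gamma t, F.marg z / (4 * (r : ℝ)) ≤ gf.fromAmt z

/-- `t` is good w.r.t. a flow `f` (for the decomposition data `parent`, `root`, `bag`):
every flow path in the support of `f` with an endpoint in `γ(t)` intersects `σ(t)`. -/
def GoodWrt {G : SimpleGraph V} (f : ∀ u v : V, G.Path u v → ℝ)
    (parent : τ → τ) (root : τ) (bag : τ → Finset V) (t : τ) : Prop :=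
  ∀ (u v : V) (p : G.Path u v), f u v p ≠ 0 →
    (u ∈ gammaOf parent bag t ∨ v ∈ gammaOf parent bag t) →
    ∃ w ∈ sigmaOf parent root bag t, w ∈ (p : G.Walk u v).support

def EGood {M : Finset (V × V)} {cap : Sym2 V → ℕ} (D : TreeDecomp τ G)
    (F : EDPFlow G cap M) (t : τ) : Prop :=
  GoodWrt F.f D.parent D.root D.bag t

def NGood {M : Finset (V × V)} {cap : V → ℕ} (D : TreeDecomp τ G)
    (F : NDPFlow G cap M) (t : τ) : Prop :=
  GoodWrt F.f D.parent D.root D.bag t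

/-- The total capacity of the edge cut `δ(U)`. -/
def cutCap (G : SimpleGraph V) (cap : Sym2 V → ℕ) (U : Finset V) : ℝ :=
  ∑ u ∈ U, ∑ v ∈ Uᶜ, if G.Adj u v then (cap s(u, v) : ℝ) else 0

/-! ### Multicommodity flows with demands, well-linkedness -/

/-- A feasible edge-capacitated multicommodity flow routing at least `dem u v`
between every pair `(u, v)`. -/
structure EMCFlow (H : SimpleGraph V) (cap : Sym2 V → ℕ) (dem : V → V → ℝ) where
  g : ∀ u v : V, H.Path u v → ℝ
  nonneg : ∀ u v p, 0 ≤ g u v p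
  routes : ∀ u v : V, dem u v ≤ pairFlow g u v
  feas : ∀ e : Sym2 V, edgeLoad g e ≤ (cap e : ℝ)

/-- A feasible node-capacitated multicommodity flow routing at least `dem u v`
between every pair `(u, v)`. -/
structure NMCFlow (H : SimpleGraph V) (cap : V → ℕ) (dem : V → V → ℝ) where
  g : ∀ u v : V, H.Path u v → ℝ
  nonneg : ∀ u v p, 0 ≤ g u v p
  routes : ∀ u v : V, dem u v ≤ pairFlow g u v
  feas : ∀ w : V, vertLoad g w ≤ (cap w : ℝ)

/-- `X` is `π`-flow-well-linked in the edge-capacitated graph `H`. -/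
def FlowWellLinked (H : SimpleGraph V) (cap : Sym2 V → ℕ) (X : Finset V)
    (π : V → ℝ) : Prop :=
  Nonempty (EMCFlow H cap fun u v =>
    if u ∈ X ∧ v ∈ X then π u * π v / (∑ w ∈ X, π w) else 0)

/-- The pairs of `M` with both endpoints in `s`. -/
def inducedPairs (M : Finset (V × V)) (s : Finset V) : Finset (V × V) :=
  M.filter fun m => m.1 ∈ s ∧ m.2 ∈ s

/-- The set of endpoints of the pairs of `M`. -/
def endpointsOf (M : Finset (V × V)) : Finset V :=
  M.image Prod.fst ∪ M.image Prod.snd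

/-! ### Minors, graph classes, torsos -/

/-- `H` is a minor of `G`, via disjoint connected branch sets. -/
def IsMinorOf {W : Type} (H : SimpleGraph W) (G : SimpleGraph V) : Prop :=
  ∃ φ : W → Finset V,
    (∀ w, ConnOn G (φ w)) ∧
    (∀ w w', w ≠ w' → Disjoint (φ w) (φ w')) ∧
    (∀ w w', H.Adj w w' → ∃ a ∈ φ w, ∃ b ∈ φ w', G.Adj a b)

/-- A class of (finite) graphs, given by its members on the canonical vertex sets. -/
def MinorClosed (𝒢 : ∀ n : ℕ, SimpleGraph (Fin n) → Prop) : Prop :=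
  ∀ {n m : ℕ} (G : SimpleGraph (Fin n)) (H : SimpleGraph (Fin m)),
    𝒢 n G → IsMinorOf H G → 𝒢 m H

/-- A finite graph belongs to the class `𝒢` (up to isomorphism). -/
def InClass (𝒢 : ∀ n : ℕ, SimpleGraph (Fin n) → Prop) {W : Type}
    (H : SimpleGraph W) : Prop :=
  ∃ (n : ℕ) (H' : SimpleGraph (Fin n)), 𝒢 n H' ∧ Nonempty (H ≃g H')

/-- The torso at `t`: the subgraph induced on `β(t)`, with all adhesions of tree edges
incident to `t` turned into cliques (as a graph on `V`; restrict to the bag to get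
the usual torso). -/
def TreeDecomp.torso (D : TreeDecomp τ G) (t : τ) : SimpleGraph V :=
  SimpleGraph.fromRel fun u v =>
    u ∈ D.bag t ∧ v ∈ D.bag t ∧
      (G.Adj u v ∨ (u ∈ D.sigma t ∧ v ∈ D.sigma t) ∨
        ∃ s : τ, s ≠ D.root ∧ D.parent s = t ∧ u ∈ D.sigma s ∧ v ∈ D.sigma s)

/-! ### Treedepth -/

/-- The connected component of `v` in `G` restricted to `s`. -/
def compOf (G : SimpleGraph V) (s : Finset V) (v : V) : Finset V :=
  s.filter fun u => (restrictG G ↑s).Reachable v u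

/-- Treedepth of `G[s]`, computed with fuel (the recursion terminates before the
fuel runs out, since both deleting a vertex and passing to a connected component of
a disconnected graph strictly decrease the number of vertices). -/
def tdAux (G : SimpleGraph V) : ℕ → Finset V → ℕ
  | 0, _ => 0
  | fuel + 1, s =>
    if hs : s.Nonempty then
      if ConnOn G s then
        1 + s.inf' hs fun v => tdAux G fuel (s.erase v)
      else
        s.sup fun v => tdAux G fuel (compOf G s v)
    else 0

/-- The treedepth of the subgraph of `G` induced on `s`:  `td(∅) = 0`;
`td(G) = 1 + min_v td(G − v)` for a connected nonempty `G`; and `td(G)` is the maximum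
of the treedepths of the connected components for a disconnected `G`. -/
def treedepth (G : SimpleGraph V) (s : Finset V) : ℕ :=
  tdAux G s.card s

end




/-- The vertex set of the graph `H` produced by the reduction (with `k = K + 2`,
`n = N + 2`): the path vertices `x^i_{v,j}`, the terminals `s^i_v`, `t^i_v`, and the
connector vertices `p_{i,j}`.  (Vertices `x^i_{v,i}`, `s^i_{u^i}`, `t^i_{u^i}` and
`p_{i,j}` for `i ≥ j` are unused, isolated dummies; the distinguished vertex `u^i`
is chosen to be `0`.) -/
inductive HV (K N : ℕ) where
  | x : Fin (K + 2) → Fin (N + 2) → Fin (K + 2) → HV K N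
  | s : Fin (K + 2) → Fin (N + 2) → HV K N
  | t : Fin (K + 2) → Fin (N + 2) → HV K N
  | p : Fin (K + 2) → Fin (K + 2) → HV K N
  deriving DecidableEq, Fintype

/-- The index of the first vertex of the path `X^i_v` (the first element of
`{0, …, k−1} \ {i}`). -/
def firstIdx (K : ℕ) (i : Fin (K + 2)) : Fin (K + 2) := if i = 0 then 1 else 0

/-- The index of the last vertex of the path `X^i_v`. -/
def lastIdx (K : ℕ) (i : Fin (K + 2)) : Fin (K + 2) :=
  if i = Fin.last (K + 1) then ⟨K, by omega⟩ else Fin.last (K + 1)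

/-- The adjacencies of the reduction graph `H`:  `s^i_v` is adjacent to the first
vertices of `X^i_v` and `X^i_{u^i}`;  `t^i_v` to their last vertices;  `p_{i,j}`
(for `i < j`) to all `x^i_{v,j}` and all `x^j_{u,i}`;  and consecutive vertices of
each path `X^i_v` (the indices `0, …, k−1` skipping `i`) are adjacent. -/
def hrel (K N : ℕ) : HV K N → HV K N → Prop
  | HV.s i v, HV.x i' w j => i' = i ∧ v ≠ 0 ∧ (w = v ∨ w = 0) ∧ j = firstIdx K i
  | HV.t i v, HV.x i' w j => i' = i ∧ v ≠ 0 ∧ (w = v ∨ w = 0) ∧ j = lastIdx K i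
  | HV.p i j, HV.x i' _w j' => i < j ∧ ((i' = i ∧ j' = j) ∨ (i' = j ∧ j' = i))
  | HV.x i v j, HV.x i' v' j' => i' = i ∧ v' = v ∧ i ≠ j ∧ i ≠ j' ∧
      ((j' : ℕ) = (j : ℕ) + 1 ∨ ((j' : ℕ) = (j : ℕ) + 2 ∧ (i : ℕ) = (j : ℕ) + 1))
  | _, _ => False

/-- The graph `H` produced by the reduction. -/
def hgraph (K N : ℕ) : SimpleGraph (HV K N) := SimpleGraph.fromRel (hrel K N)

open scoped Classical in
/-- The terminal pairs `M = M_st ∪ M_x` of the reduction:  `(s^i_v, t^i_v)` for every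
`i` and `v ≠ u^i = 0`, and `(x^i_{v,j}, x^j_{u,i})` for every edge `vu` of `G` with
`v ∈ V^i`, `u ∈ V^j`, `i < j`. -/
noncomputable def Mpairs (K N : ℕ) (G : SimpleGraph (Fin (K + 2) × Fin (N + 2))) :
    Finset (HV K N × HV K N) :=
  Finset.univ.filter fun m : HV K N × HV K N =>
    (∃ (i : Fin (K + 2)) (v : Fin (N + 2)), v ≠ 0 ∧ m.1 = HV.s i v ∧ m.2 = HV.t i v) ∨
    (∃ (i j : Fin (K + 2)) (v u : Fin (N + 2)), i < j ∧ G.Adj (i, v) (j, u) ∧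
      m.1 = HV.x i v j ∧ m.2 = HV.x j u i)

/-- The required number of routed pairs, `ℓ = k(n−1) + k(k−1)/2`. -/
def ellKN (K N : ℕ) : ℕ := (K + 2) * (N + 1) + (K + 2) * (K + 1) / 2

/-- `G` (on vertex set `V = V^1 ⊎ ⋯ ⊎ V^k`, `V^i = {i} × Fin n`) has a multicolored
clique: a `k`-clique with exactly one vertex in each `V^i`. -/
def HasMulticoloredClique (K N : ℕ) (G : SimpleGraph (Fin (K + 2) × Fin (N + 2))) : Prop :=
  ∃ f : Fin (K + 2) → Fin (N + 2), ∀ i j, i ≠ j → G.Adj (i, f i) (j, f j)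


/-! Deleting a vertex set `A` raises the treedepth by at most `|A|`.  After deleting the vertices
`p_{i,j}`, every component of `H` lies in one colour class `i`, where the paths `X^i_v` are linked
to each other only through the two ends of `X^i_{u^i}`.  Deleting those ends leaves components
inside the gadgets `{s^i_v, t^i_v} ∪ X^i_v` of `k + 1` vertices, so
`td(H) ≤ C(k,2) + 2 + (k + 1)`. -/

section ConnOn

variable {V : Type} {G : SimpleGraph V}

lemma ConnOn.exists_adj {s : Finset V} (h : ConnOn G s) (hs : 1 < #s) {u : V} (hu : u ∈ s) :
    ∃ w ∈ s, G.Adj u w := by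
  obtain ⟨v, hv, hvu⟩ := exists_mem_ne hs u
  obtain ⟨p⟩ := h.2 u hu v hv
  cases p with
  | nil => exact absurd rfl hvu
  | cons ha _ => exact ⟨_, ha.2.1, ha.2.2⟩

lemma ConnOn.apply_eq {β : Type*} {s : Finset V} (h : ConnOn G s) {f : V → β}
    (hf : ∀ a ∈ s, ∀ b ∈ s, G.Adj a b → f a = f b) {u v : V} (hu : u ∈ s) (hv : v ∈ s) :
    f u = f v := by
  obtain ⟨p⟩ := h.2 u hu v hv
  clear hu hv
  induction p with
  | nil => rfl
  | cons ha _ ih => exact (hf _ ha.1 _ ha.2.1 ha.2.2).trans ih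

end ConnOn

section Treedepth

variable {V : Type} [Fintype V] [DecidableEq V] {G : SimpleGraph V}

lemma tdAux_empty (G : SimpleGraph V) (fuel : ℕ) : tdAux G fuel ∅ = 0 := by
  cases fuel <;> simp [tdAux]

lemma compOf_ssubset {s : Finset V} (hs : s.Nonempty) (hc : ¬ ConnOn G s) (v : V) :
    compOf G s v ⊂ s := by
  obtain ⟨u, hu, w, hw, huw⟩ : ∃ u ∈ s, ∃ w ∈ s, ¬ (restrictG G ↑s).Reachable u w := by
    simpa [ConnOn, hs] using hc
  rw [compOf, ssubset_iff_of_subset (filter_subset _ _)]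
  by_cases hvu : (restrictG G ↑s).Reachable v u
  · exact ⟨w, hw, fun hvw => huw (hvu.symm.trans (mem_filter.1 hvw).2)⟩
  · exact ⟨u, hu, fun h => hvu (mem_filter.1 h).2⟩

lemma tdAux_eq_of_card_le (G : SimpleGraph V) :
    ∀ (fuel fuel' : ℕ) (s : Finset V), #s ≤ fuel → #s ≤ fuel' →
      tdAux G fuel s = tdAux G fuel' s := by
  intro fuel
  induction fuel with
  | zero =>
    intro fuel' s hs _
    rw [card_eq_zero.1 (Nat.le_zero.1 hs), tdAux_empty, tdAux_empty]
  | succ fuel ih =>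
    intro fuel' s h h'
    rcases s.eq_empty_or_nonempty with rfl | hs
    · rw [tdAux_empty, tdAux_empty]
    obtain ⟨fuel', rfl⟩ : ∃ f, fuel' = f + 1 := ⟨fuel' - 1, by have := hs.card_pos; omega⟩
    simp only [tdAux, dif_pos hs]
    split_ifs with hc
    · congr 1
      refine inf'_congr hs rfl fun v hv => ?_
      have := card_erase_of_mem hv
      exact ih _ _ (by omega) (by omega)
    · refine sup_congr rfl fun v hv => ?_
      have := card_lt_card (compOf_ssubset hs hc v)
      exact ih _ _ (by omega) (by omega)

lemma treedepth_of_connOn {s : Finset V} (hc : ConnOn G s) :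
    treedepth G s = 1 + s.inf' hc.1 fun v => treedepth G (s.erase v) := by
  obtain ⟨n, hn⟩ : ∃ n, #s = n + 1 := ⟨#s - 1, by have := hc.1.card_pos; omega⟩
  rw [treedepth, hn, tdAux, dif_pos hc.1, if_pos hc]
  congr 1
  refine inf'_congr hc.1 rfl fun v hv => ?_
  have := card_erase_of_mem hv
  exact tdAux_eq_of_card_le G _ _ _ (by omega) le_rfl

lemma treedepth_of_not_connOn {s : Finset V} (hs : s.Nonempty) (hc : ¬ ConnOn G s) :
    treedepth G s = s.sup fun v => treedepth G (compOf G s v) := by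
  obtain ⟨n, hn⟩ : ∃ n, #s = n + 1 := ⟨#s - 1, by have := hs.card_pos; omega⟩
  rw [treedepth, hn, tdAux, dif_pos hs, if_neg hc]
  refine sup_congr rfl fun v hv => ?_
  have := card_lt_card (compOf_ssubset hs hc v)
  exact tdAux_eq_of_card_le G _ _ _ (by omega) le_rfl

theorem treedepth_le_card_inter_add (A : Finset V) {c : ℕ} (s : Finset V)
    (h : ∀ t ⊆ s \ A, ConnOn G t → treedepth G t ≤ c) :
    treedepth G s ≤ #(s ∩ A) + c := by
  induction s using strongInduction with
  | H s ih =>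
  have ih' : ∀ t ⊂ s, treedepth G t ≤ #(t ∩ A) + c := fun t hts =>
    ih t hts fun r hr => h r (hr.trans (sdiff_subset_sdiff hts.subset le_rfl))
  rcases s.eq_empty_or_nonempty with rfl | hs
  · simp [treedepth, tdAux_empty]
  by_cases hc : ConnOn G s
  · rcases (s ∩ A).eq_empty_or_nonempty with hA | ⟨a, ha⟩
    · have hsA : s \ A = s := sdiff_eq_self_iff_disjoint.2
        (disjoint_iff_inter_eq_empty.2 hA)
      exact (h s hsA.ge hc).trans (Nat.le_add_left _ _)
    · have has := mem_of_mem_inter_left ha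
      have herase := ih' _ (erase_ssubset has)
      rw [erase_inter, card_erase_of_mem ha] at herase
      have hpos := card_pos.2 ⟨a, ha⟩
      rw [treedepth_of_connOn hc]
      have := inf'_le (fun v => treedepth G (s.erase v)) has
      omega
  · rw [treedepth_of_not_connOn hs hc]
    refine Finset.sup_le fun v hv => ?_
    have hsub := compOf_ssubset hs hc v
    exact (ih' _ hsub).trans
      (Nat.add_le_add_right (card_le_card (inter_subset_inter_right hsub.subset)) c)

theorem treedepth_le_card (s : Finset V) : treedepth G s ≤ #s := by
  simpa using treedepth_le_card_inter_add (G := G) (c := 0) s s fun t ht hc => by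
    simp [subset_empty.1 (by simpa using ht), ConnOn] at hc

end Treedepth

section Reduction

variable {K N : ℕ}

def colOf : HV K N → Fin (K + 2)
  | HV.x i _ _ | HV.s i _ | HV.t i _ | HV.p i _ => i

def rowOf : HV K N → Fin (N + 2)
  | HV.x _ v _ | HV.s _ v | HV.t _ v => v
  | HV.p _ _ => 0

variable (K N) in
def connectors : Finset (HV K N) :=
  univ.biUnion fun j => (Iio j).image fun i => HV.p i j

variable (N) in
/-- The first and last vertices of the path `X^i_{u^i}`. -/
def anchorEnds (i : Fin (K + 2)) : Finset (HV K N) :=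
  {HV.x i 0 (firstIdx K i), HV.x i 0 (lastIdx K i)}

def gadget (i : Fin (K + 2)) (v : Fin (N + 2)) : Finset (HV K N) :=
  {HV.s i v, HV.t i v} ∪ (univ.erase i).image (HV.x i v)

lemma mem_connectors {a b : Fin (K + 2)} : HV.p a b ∈ connectors K N ↔ a < b := by
  simp [connectors]

lemma card_connectors_le : #(connectors K N) ≤ (K + 2) * (K + 1) / 2 :=
  calc #(connectors K N) ≤ ∑ j : Fin (K + 2), #((Iio j).image fun i => HV.p (N := N) i j) :=
        card_biUnion_le
    _ ≤ ∑ j : Fin (K + 2), (j : ℕ) :=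
        sum_le_sum fun j _ => card_image_le.trans (Fin.card_Iio j).le
    _ = (K + 2) * (K + 1) / 2 := by
        rw [Fin.sum_univ_eq_sum_range (fun j => j), sum_range_id]; rfl

lemma card_gadget_le (i : Fin (K + 2)) (v : Fin (N + 2)) : #(gadget i v) ≤ K + 3 :=
  calc #(gadget i v) ≤ #({HV.s i v, HV.t i v} : Finset (HV K N)) + (K + 1) := by
        refine (card_union_le _ _).trans (Nat.add_le_add_left ?_ _)
        exact card_image_le.trans (by simp)
    _ ≤ K + 3 := by have := card_le_two (a := HV.s i v) (b := HV.t (K := K) i v); omega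

lemma firstIdx_ne (i : Fin (K + 2)) : firstIdx K i ≠ i := by
  unfold firstIdx; split_ifs with h <;> simp [h, eq_comm]

lemma lastIdx_ne (i : Fin (K + 2)) : lastIdx K i ≠ i := by
  unfold lastIdx; split_ifs with h <;> simp [h, eq_comm, Fin.ext_iff]

lemma lt_of_hgraph_adj_p {a b : Fin (K + 2)} {w : HV K N} (h : (hgraph K N).Adj (HV.p a b) w) :
    a < b := by
  rw [hgraph, fromRel_adj] at h
  rcases h.2 with h | h <;> cases w <;> simp_all [hrel]

lemma not_hgraph_adj_x_self (i : Fin (K + 2)) (v : Fin (N + 2)) (w : HV K N) :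
    ¬ (hgraph K N).Adj (HV.x i v i) w := by
  rw [hgraph, fromRel_adj]
  have := firstIdx_ne i
  have := lastIdx_ne i
  rintro ⟨-, h | h⟩ <;> cases w <;> simp only [hrel] at h <;> grind

lemma colOf_eq_of_hgraph_adj {u w : HV K N} (h : (hgraph K N).Adj u w)
    (hu : u ∉ connectors K N) (hw : w ∉ connectors K N) : colOf u = colOf w := by
  cases u
  case p a b => exact absurd (mem_connectors.2 (lt_of_hgraph_adj_p h)) hu
  all_goals cases w
  case p a b => exact absurd (mem_connectors.2 (lt_of_hgraph_adj_p h.symm)) hw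
  all_goals rw [hgraph, fromRel_adj] at h; rcases h with ⟨-, h | h⟩ <;> simp_all [hrel, colOf]

lemma rowOf_eq_of_hgraph_adj {i : Fin (K + 2)} {u w : HV K N} (h : (hgraph K N).Adj u w)
    (hu : u ∉ connectors K N) (hw : w ∉ connectors K N)
    (hu' : u ∉ anchorEnds N i) (hw' : w ∉ anchorEnds N i) (hi : colOf u = i) :
    rowOf u = rowOf w := by
  cases u
  case p a b => exact absurd (mem_connectors.2 (lt_of_hgraph_adj_p h)) hu
  all_goals cases w
  case p a b => exact absurd (mem_connectors.2 (lt_of_hgraph_adj_p h.symm)) hw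
  all_goals rw [hgraph, fromRel_adj] at h; rcases h with ⟨-, h | h⟩ <;>
    simp_all [hrel, colOf, rowOf, anchorEnds]

lemma mem_gadget_of_hgraph_adj {u w : HV K N} (h : (hgraph K N).Adj u w)
    (hu : u ∉ connectors K N) : u ∈ gadget (colOf u) (rowOf u) := by
  cases u
  case p a b => exact absurd (mem_connectors.2 (lt_of_hgraph_adj_p h)) hu
  case x i v j =>
    have hj : j ≠ i := by rintro rfl; exact not_hgraph_adj_x_self _ _ w h
    simp [gadget, colOf, rowOf, hj]
  all_goals simp [gadget, colOf, rowOf]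

lemma treedepth_le_of_connOn_of_disjoint_anchorEnds {i : Fin (K + 2)} {t : Finset (HV K N)}
    (hconn : ConnOn (hgraph K N) t) (hP : Disjoint t (connectors K N))
    (hA : Disjoint t (anchorEnds N i)) (hi : ∀ u ∈ t, colOf u = i) :
    treedepth (hgraph K N) t ≤ K + 3 := by
  rcases le_or_gt #t 1 with ht | ht
  · exact (treedepth_le_card t).trans (by omega)
  obtain ⟨u₀, hu₀⟩ := hconn.1
  have hrow : ∀ u ∈ t, rowOf u = rowOf u₀ := fun u hu =>
    hconn.apply_eq (fun a ha b hb hab => rowOf_eq_of_hgraph_adj hab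
      (disjoint_left.1 hP ha) (disjoint_left.1 hP hb)
      (disjoint_left.1 hA ha) (disjoint_left.1 hA hb) (hi a ha)) hu hu₀
  have hsub : t ⊆ gadget i (rowOf u₀) := fun u hu => by
    obtain ⟨w, -, huw⟩ := hconn.exists_adj ht hu
    simpa [hi u hu, hrow u hu] using mem_gadget_of_hgraph_adj huw (disjoint_left.1 hP hu)
  exact (treedepth_le_card t).trans ((card_le_card hsub).trans (card_gadget_le _ _))

lemma treedepth_le_of_connOn_of_disjoint_connectors {t : Finset (HV K N)}
    (hconn : ConnOn (hgraph K N) t) (hP : Disjoint t (connectors K N)) :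
    treedepth (hgraph K N) t ≤ K + 5 := by
  obtain ⟨u₀, hu₀⟩ := hconn.1
  have hcol : ∀ u ∈ t, colOf u = colOf u₀ := fun u hu =>
    hconn.apply_eq (fun a ha b hb hab => colOf_eq_of_hgraph_adj hab
      (disjoint_left.1 hP ha) (disjoint_left.1 hP hb)) hu hu₀
  have hsplit := treedepth_le_card_inter_add (anchorEnds N (colOf u₀)) t fun r hr hconn' =>
    have hr' := subset_sdiff.1 hr
    treedepth_le_of_connOn_of_disjoint_anchorEnds hconn' (hP.mono_left hr'.1) hr'.2
      fun u hu => hcol u (hr'.1 hu)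
  have hends : #(t ∩ anchorEnds N (colOf u₀)) ≤ 2 :=
    (card_le_card inter_subset_right).trans card_le_two
  omega

end Reduction

/-- **Treedepth of the reduction graph.**
The graph `H` produced by the reduction from a Multicolored Clique instance with
`k = K + 2` colors and `n = N + 2` vertices per color has treedepth at most
`k(k−1)/2 + k + 3`; in particular `td(H) = O(k²)`. -/
theorem reduction_treedepth (K N : ℕ) :
    treedepth (hgraph K N) Finset.univ ≤
      (K + 2) * (K + 1) / 2 + (K + 2) + 3 := by
  have h := treedepth_le_card_inter_add (connectors K N) univ fun t ht hconn =>
    treedepth_le_of_connOn_of_disjoint_connectors hconn (subset_sdiff.1 ht).2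
  rw [univ_inter] at h
  have := card_connectors_le (K := K) (N := N)
  omega

end Paper
end

section
/- Let (G, M) be an instance of MaxNDP in which every terminal has degree 1 and capacity 1, let (f, x) be a feasible fractional solution with x(s) = x(t) for every pair (s,t) ∈ M, and let g be a feasible flow (respecting node capacities) that routes at least x(v)/α units of flow from each terminal v to a set S ⊆ V(G), where α ≥ 1. Then there exist a feasible fractional solution (f_1, x_1) with f_1 = f/3 (so |f_1| = |f|/3) and a feasible flow g_1 that routes at least x_1(v)/α units of flow from each terminal v to S and, moreover, for every pair (s,t) ∈ M and every vertex v ∈ S, g_1 sends the same amount of flow from s to v as from t to v. -/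
open SimpleGraph Finset
open scoped Classical

namespace Paper

/-!
Truncate `g` to a flow `h` sending exactly `x(z)/α` out of every vertex `z`.  The new flow
sends one sixth of `h` out of each terminal `s` directly, and one sixth of the `f`-flow between
`s` and its partner `t` onwards along `h` from `t`, rescaled by `1/x(t)`.  In a matching the
marginal of either terminal of a pair is the flow between them, so `x(s) = x(t)` and both
terminals send `(h(s,v) + h(t,v))/6` to each `v`, which is `x(s)/(3α)` in total.  A vertex on the
shortcut of a concatenated path lies on one of the two pieces, and the rescaling by `1/x(t)` is
at most one per unit of `f` arriving at `t` and per unit of `h` leaving `t`, so the concatenated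
part loads a vertex at most as much as `f` in both directions plus `h`: in total at most
`(cap + 2 cap + cap)/6`.
-/

section PathFlows

variable {V : Type} {G : SimpleGraph V}

def undirectedFlow (f : ∀ u v : V, G.Path u v → ℝ) (u v : V) (p : G.Path u v) : ℝ :=
  f u v p + f v u p.reverse

lemma undirectedFlow_nonneg {f : ∀ u v : V, G.Path u v → ℝ} (hf : ∀ u v p, 0 ≤ f u v p)
    (u v : V) (p : G.Path u v) : 0 ≤ undirectedFlow f u v p :=
  add_nonneg (hf u v p) (hf v u p.reverse)

variable [DecidableEq V]

def throughFlow (f : ∀ u v : V, G.Path u v → ℝ) (w : V) (u v : V) (p : G.Path u v) : ℝ :=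
  if w ∈ p.1.support then f u v p else 0

lemma throughFlow_nonneg {f : ∀ u v : V, G.Path u v → ℝ} (hf : ∀ u v p, 0 ≤ f u v p)
    (w u v : V) (p : G.Path u v) : 0 ≤ throughFlow f w u v p := by
  unfold throughFlow
  split_ifs
  exacts [hf u v p, le_rfl]

lemma throughFlow_eq_mul (f : ∀ u v : V, G.Path u v → ℝ) (w u v : V) (p : G.Path u v) :
    throughFlow f w u v p = f u v p * if w ∈ p.1.support then 1 else 0 := by
  simp [throughFlow]

lemma indicator_support_append_toPath_le {u t v : V} (w : V) (p₁ : G.Path u t)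
    (q : G.Path t v) :
    (if w ∈ (p₁.1.append q.1).toPath.1.support then 1 else 0 : ℝ)
      ≤ (if w ∈ p₁.1.support then 1 else 0) + if w ∈ q.1.support then 1 else 0 := by
  have hsub := Walk.support_toPath_subset_support (p₁.1.append q.1)
  split_ifs with h h₁ h₂ <;> norm_num
  exact absurd ((Walk.mem_support_append_iff _ _).mp (hsub h)) (by tauto)

variable [Fintype V]

lemma pairFlow_nonneg {f : ∀ u v : V, G.Path u v → ℝ} (hf : ∀ u v p, 0 ≤ f u v p)
    (u v : V) : 0 ≤ pairFlow f u v :=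
  Finset.sum_nonneg fun _ _ => hf u v _

lemma pairFlow_add (f f' : ∀ u v : V, G.Path u v → ℝ) (u v : V) :
    pairFlow (f + f') u v = pairFlow f u v + pairFlow f' u v :=
  Finset.sum_add_distrib

lemma pairFlow_smul (c : ℝ) (f : ∀ u v : V, G.Path u v → ℝ) (u v : V) :
    pairFlow (c • f) u v = c * pairFlow f u v :=
  (Finset.mul_sum _ _ _).symm

lemma pairFlow_le_sum_pairFlow {f : ∀ u v : V, G.Path u v → ℝ} (hf : ∀ u v p, 0 ≤ f u v p)
    (u v : V) : pairFlow f u v ≤ ∑ v', pairFlow f u v' :=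
  Finset.single_le_sum (fun v' _ => pairFlow_nonneg hf u v') (Finset.mem_univ v)

lemma margOf_eq_sum (f : ∀ u v : V, G.Path u v → ℝ) (z : V) :
    margOf f z = ∑ t, (pairFlow f z t + pairFlow f t z) :=
  Finset.sum_add_distrib.symm

lemma margOf_smul (c : ℝ) (f : ∀ u v : V, G.Path u v → ℝ) (z : V) :
    margOf (c • f) z = c * margOf f z := by
  simp only [margOf_eq_sum, pairFlow_smul, ← mul_add, Finset.mul_sum]

lemma margOf_nonneg {f : ∀ u v : V, G.Path u v → ℝ} (hf : ∀ u v p, 0 ≤ f u v p) (z : V) :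
    0 ≤ margOf f z :=
  add_nonneg (Finset.sum_nonneg fun _ _ => pairFlow_nonneg hf _ _)
    (Finset.sum_nonneg fun _ _ => pairFlow_nonneg hf _ _)

lemma valueOf_smul (c : ℝ) (f : ∀ u v : V, G.Path u v → ℝ) (M : Finset (V × V)) :
    valueOf (c • f) M = c * valueOf f M := by
  simp only [valueOf, pairFlow_smul, Finset.mul_sum]

lemma vertLoad_eq_sum_sum_pairFlow_throughFlow (f : ∀ u v : V, G.Path u v → ℝ) (w : V) :
    vertLoad f w = ∑ u, ∑ v, pairFlow (throughFlow f w) u v :=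
  rfl

lemma vertLoad_add (f f' : ∀ u v : V, G.Path u v → ℝ) (w : V) :
    vertLoad (f + f') w = vertLoad f w + vertLoad f' w := by
  simp only [vertLoad, Pi.add_apply, ite_add_zero, Finset.sum_add_distrib]

lemma vertLoad_smul (c : ℝ) (f : ∀ u v : V, G.Path u v → ℝ) (w : V) :
    vertLoad (c • f) w = c * vertLoad f w := by
  simp only [vertLoad, Pi.smul_apply, smul_eq_mul, Finset.mul_sum, mul_ite, mul_zero]

lemma vertLoad_mono {f f' : ∀ u v : V, G.Path u v → ℝ} (h : ∀ u v p, f u v p ≤ f' u v p)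
    (w : V) : vertLoad f w ≤ vertLoad f' w := by
  unfold vertLoad
  gcongr with u _ v _ p _
  split_ifs
  exacts [h u v p, le_rfl]

lemma sum_path_reverse (u v : V) (φ : G.Path v u → ℝ) :
    ∑ p : G.Path u v, φ p.reverse = ∑ q : G.Path v u, φ q :=
  Fintype.sum_equiv
    ⟨Path.reverse, Path.reverse, fun p => Subtype.ext p.1.reverse_reverse,
      fun p => Subtype.ext p.1.reverse_reverse⟩ _ _ fun _ => rfl

lemma pairFlow_undirectedFlow (f : ∀ u v : V, G.Path u v → ℝ) (u v : V) :
    pairFlow (undirectedFlow f) u v = pairFlow f u v + pairFlow f v u := by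
  simp only [pairFlow, undirectedFlow, Finset.sum_add_distrib, sum_path_reverse u v (f v u)]

lemma sum_pairFlow_undirectedFlow (f : ∀ u v : V, G.Path u v → ℝ) (t : V) :
    ∑ u, pairFlow (undirectedFlow f) u t = margOf f t := by
  simp only [pairFlow_undirectedFlow, margOf_eq_sum, add_comm]

lemma vertLoad_undirectedFlow (f : ∀ u v : V, G.Path u v → ℝ) (w : V) :
    vertLoad (undirectedFlow f) w = 2 * vertLoad f w := by
  have hrev : ∀ u v : V, ∑ p : G.Path u v, (if w ∈ p.1.support then f v u p.reverse else 0)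
      = ∑ q : G.Path v u, if w ∈ q.1.support then f v u q else 0 := by
    intro u v
    rw [← sum_path_reverse u v]
    simp [Path.reverse_coe]
  simp only [vertLoad, undirectedFlow, ite_add_zero, Finset.sum_add_distrib, hrev]
  rw [Finset.sum_comm (f := fun u v => ∑ q : G.Path v u, _)]
  ring

end PathFlows

noncomputable section Concat

variable {V : Type} [Fintype V] [DecidableEq V] {G : SimpleGraph V}

def concatFlow (a : ∀ u v : V, G.Path u v → ℝ) (c : V → ℝ) (b : ∀ u v : V, G.Path u v → ℝ)
    (u v : V) (p : G.Path u v) : ℝ :=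
  ∑ t, c t * ∑ p₁ : G.Path u t, ∑ q : G.Path t v,
    if (p₁.1.append q.1).toPath = p then a u t p₁ * b t v q else 0

variable {a b : ∀ u v : V, G.Path u v → ℝ} {c : V → ℝ}

lemma sum_concatFlow_mul (u v : V) (φ : G.Path u v → ℝ) :
    ∑ p, concatFlow a c b u v p * φ p
      = ∑ t, c t * ∑ p₁ : G.Path u t, ∑ q : G.Path t v,
          a u t p₁ * b t v q * φ (p₁.1.append q.1).toPath := by
  simp only [concatFlow, Finset.sum_mul, mul_assoc, ite_mul, zero_mul]
  rw [Finset.sum_comm]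
  refine Finset.sum_congr rfl fun t _ => ?_
  simp only [← Finset.mul_sum]
  congr 1
  rw [Finset.sum_comm]
  refine Finset.sum_congr rfl fun p₁ _ => ?_
  rw [Finset.sum_comm]
  simp [Finset.mul_sum]

lemma concatFlow_nonneg (hc : ∀ t, 0 ≤ c t) (ha : ∀ u v p, 0 ≤ a u v p)
    (hb : ∀ u v p, 0 ≤ b u v p) (u v : V) (p : G.Path u v) : 0 ≤ concatFlow a c b u v p := by
  unfold concatFlow
  refine Finset.sum_nonneg fun t _ => mul_nonneg (hc t) <| Finset.sum_nonneg fun p₁ _ =>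
    Finset.sum_nonneg fun q _ => ?_
  split_ifs
  exacts [mul_nonneg (ha _ _ _) (hb _ _ _), le_rfl]

lemma concatFlow_eq_zero {u v : V} (hb : ∀ t q, b t v q = 0) (p : G.Path u v) :
    concatFlow a c b u v p = 0 := by
  simp [concatFlow, hb]

lemma pairFlow_concatFlow (u v : V) :
    pairFlow (concatFlow a c b) u v = ∑ t, c t * (pairFlow a u t * pairFlow b t v) := by
  simpa [pairFlow, Finset.sum_mul_sum] using sum_concatFlow_mul (a := a) (b := b) (c := c) u v 1

lemma pairFlow_throughFlow_concatFlow_le (hc : ∀ t, 0 ≤ c t) (ha : ∀ u v p, 0 ≤ a u v p)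
    (hb : ∀ u v p, 0 ≤ b u v p) (w u v : V) :
    pairFlow (throughFlow (concatFlow a c b) w) u v
      ≤ ∑ t, c t * (pairFlow (throughFlow a w) u t * pairFlow b t v
          + pairFlow a u t * pairFlow (throughFlow b w) t v) := by
  calc pairFlow (throughFlow (concatFlow a c b) w) u v
      = ∑ t, c t * ∑ p₁ : G.Path u t, ∑ q : G.Path t v, a u t p₁ * b t v q *
          if w ∈ (p₁.1.append q.1).toPath.1.support then 1 else 0 := by
        simp only [pairFlow, throughFlow_eq_mul, sum_concatFlow_mul]
    _ ≤ ∑ t, c t * ∑ p₁ : G.Path u t, ∑ q : G.Path t v, a u t p₁ * b t v q *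
          ((if w ∈ p₁.1.support then 1 else 0) + if w ∈ q.1.support then 1 else 0) := by
        gcongr with t _ p₁ _ q _
        · exact hc t
        · exact mul_nonneg (ha _ _ _) (hb _ _ _)
        · exact indicator_support_append_toPath_le w p₁ q
    _ = _ := by
        simp only [pairFlow, throughFlow_eq_mul, Finset.sum_mul_sum, ← Finset.sum_add_distrib]
        congr! 3
        exact Finset.sum_congr rfl fun _ _ => by ring

lemma vertLoad_concatFlow_le (hc : ∀ t, 0 ≤ c t) (ha : ∀ u v p, 0 ≤ a u v p)
    (hb : ∀ u v p, 0 ≤ b u v p) (hca : ∀ t, c t * ∑ u, pairFlow a u t ≤ 1)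
    (hcb : ∀ t, c t * ∑ v, pairFlow b t v ≤ 1) (w : V) :
    vertLoad (concatFlow a c b) w ≤ vertLoad a w + vertLoad b w := by
  calc vertLoad (concatFlow a c b) w
      ≤ ∑ u, ∑ v, ∑ t, c t * (pairFlow (throughFlow a w) u t * pairFlow b t v
          + pairFlow a u t * pairFlow (throughFlow b w) t v) := by
        rw [vertLoad_eq_sum_sum_pairFlow_throughFlow]
        gcongr with u _ v _
        exact pairFlow_throughFlow_concatFlow_le hc ha hb w u v
    _ = ∑ t, c t * ((∑ u, pairFlow (throughFlow a w) u t) * (∑ v, pairFlow b t v)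
          + (∑ u, pairFlow a u t) * ∑ v, pairFlow (throughFlow b w) t v) := by
        simp only [Finset.sum_mul, Finset.mul_sum, ← Finset.sum_add_distrib]
        rw [Finset.sum_comm, Finset.sum_congr rfl fun _ _ => Finset.sum_comm]
        exact Finset.sum_comm
    _ ≤ ∑ t, (∑ u, pairFlow (throughFlow a w) u t + ∑ v, pairFlow (throughFlow b w) t v) := by
        refine Finset.sum_le_sum fun t _ => ?_
        have hA : 0 ≤ ∑ u, pairFlow (throughFlow a w) u t :=
          Finset.sum_nonneg fun u _ => pairFlow_nonneg (throughFlow_nonneg ha w) u t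
        have hB : 0 ≤ ∑ v, pairFlow (throughFlow b w) t v :=
          Finset.sum_nonneg fun v _ => pairFlow_nonneg (throughFlow_nonneg hb w) t v
        calc _ = (c t * ∑ v, pairFlow b t v) * ∑ u, pairFlow (throughFlow a w) u t
              + (c t * ∑ u, pairFlow a u t) * ∑ v, pairFlow (throughFlow b w) t v := by ring
          _ ≤ _ := add_le_add (mul_le_of_le_one_left hA (hcb t))
              (mul_le_of_le_one_left hB (hca t))
    _ = vertLoad a w + vertLoad b w := by
        rw [Finset.sum_add_distrib, vertLoad_eq_sum_sum_pairFlow_throughFlow,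
          vertLoad_eq_sum_sum_pairFlow_throughFlow, Finset.sum_comm]

end Concat

section Matching

variable {V : Type} {M : Finset (V × V)}

lemma PairsMatching.eq_of_mem (hM : PairsMatching M) {m m' : V × V} (hm : m ∈ M)
    (hm' : m' ∈ M) (h : m.1 = m'.1 ∨ m.1 = m'.2 ∨ m.2 = m'.1 ∨ m.2 = m'.2) : m = m' := by
  by_contra hne
  have := hM.2 m hm m' hm' hne
  tauto

lemma PairsMatching.not_mem_of_partner (hM : PairsMatching M) {s t t' : V}
    (hst : (s, t) ∈ M ∨ (t, s) ∈ M) (ht' : t' ≠ t) : (s, t') ∉ M ∧ (t', s) ∉ M := by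
  constructor <;> intro h' <;> rcases hst with hst | hst <;>
  · have e := hM.eq_of_mem hst h' (by simp)
    simp only [Prod.mk.injEq] at e
    grind

lemma Terminal.exists_partner {z : V} (hz : Terminal M z) :
    ∃ t, (z, t) ∈ M ∨ (t, z) ∈ M := by
  obtain ⟨m, hm, rfl | rfl⟩ := hz
  exacts [⟨m.2, Or.inl hm⟩, ⟨m.1, Or.inr hm⟩]

end Matching

section Marginals

variable {V : Type} [Fintype V] [DecidableEq V] {G : SimpleGraph V} {M : Finset (V × V)}
  {f : ∀ u v : V, G.Path u v → ℝ}

lemma PairsMatching.pairFlow_add_pairFlow_eq_ite (hM : PairsMatching M)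
    (hf : ∀ u v, (u, v) ∉ M → pairFlow f u v = 0) {s t : V} (hst : (s, t) ∈ M ∨ (t, s) ∈ M)
    (t' : V) :
    pairFlow f s t' + pairFlow f t' s = if t' = t then pairFlow f s t + pairFlow f t s else 0 := by
  split_ifs with ht'
  · rw [ht']
  · obtain ⟨h₁, h₂⟩ := hM.not_mem_of_partner hst ht'
    rw [hf _ _ h₁, hf _ _ h₂, add_zero]

lemma PairsMatching.margOf_eq_of_partner (hM : PairsMatching M)
    (hf : ∀ u v, (u, v) ∉ M → pairFlow f u v = 0) {s t : V} (hst : (s, t) ∈ M ∨ (t, s) ∈ M) :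
    margOf f s = pairFlow f s t + pairFlow f t s := by
  rw [margOf_eq_sum, Finset.sum_congr rfl fun t' _ => hM.pairFlow_add_pairFlow_eq_ite hf hst t',
    Finset.sum_ite_eq', if_pos (Finset.mem_univ t)]

lemma margOf_eq_zero_of_not_terminal (hf : ∀ u v, (u, v) ∉ M → pairFlow f u v = 0) {z : V}
    (hz : ¬Terminal M z) : margOf f z = 0 := by
  rw [margOf_eq_sum]
  refine Finset.sum_eq_zero fun t _ => ?_
  rw [hf z t fun h => hz ⟨_, h, Or.inl rfl⟩, hf t z fun h => hz ⟨_, h, Or.inr rfl⟩, add_zero]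

end Marginals

noncomputable section Flows

variable {V : Type} [Fintype V] [DecidableEq V] {G : SimpleGraph V} {cap : V → ℕ}
  {M : Finset (V × V)} {S : Finset V}

lemma NDPFlow.pairFlow_eq_zero (F : NDPFlow G cap M) (u v : V) (h : (u, v) ∉ M) :
    pairFlow F.f u v = 0 :=
  Finset.sum_eq_zero fun p _ => F.supp u v h p

lemma NDPFlow.marg_nonneg (F : NDPFlow G cap M) (z : V) : 0 ≤ F.marg z :=
  margOf_nonneg F.nonneg z

lemma NDPFlow.marg_eq_of_partner (F : NDPFlow G cap M) (hM : PairsMatching M) {s t : V}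
    (hst : (s, t) ∈ M ∨ (t, s) ∈ M) : F.marg s = F.marg t := by
  rw [NDPFlow.marg, NDPFlow.marg, hM.margOf_eq_of_partner F.pairFlow_eq_zero hst,
    hM.margOf_eq_of_partner F.pairFlow_eq_zero hst.symm, add_comm]

def NDPFlow.smul (F : NDPFlow G cap M) (c : ℝ) (hc₀ : 0 ≤ c) (hc₁ : c ≤ 1) :
    NDPFlow G cap M where
  f := c • F.f
  nonneg u v p := mul_nonneg hc₀ (F.nonneg u v p)
  supp u v h p := by simp [F.supp u v h p]
  le_one m hm := by
    rw [pairFlow_smul]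
    exact mul_le_one₀ hc₁ (pairFlow_nonneg F.nonneg _ _) (F.le_one m hm)
  feas w := by
    rw [vertLoad_smul]
    exact (mul_le_mul_of_nonneg_left (F.feas w) hc₀).trans
      (mul_le_of_le_one_left (Nat.cast_nonneg _) hc₁)

lemma NFlowToSet.fromAmt_nonneg (g : NFlowToSet G cap S) (z : V) : 0 ≤ g.fromAmt z :=
  Finset.sum_nonneg fun v _ => pairFlow_nonneg g.nonneg z v

lemma NFlowToSet.pairFlow_le_fromAmt (g : NFlowToSet G cap S) (u v : V) :
    pairFlow g.g u v ≤ g.fromAmt u :=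
  pairFlow_le_sum_pairFlow g.nonneg u v

lemma NFlowToSet.exists_fromAmt_eq (g : NFlowToSet G cap S) (a : V → ℝ) (ha : ∀ z, 0 ≤ a z)
    (hle : ∀ z, a z ≤ g.fromAmt z) : ∃ h : NFlowToSet G cap S, ∀ z, h.fromAmt z = a z := by
  set c : V → ℝ := fun z => a z / g.fromAmt z
  have hc₀ z : 0 ≤ c z := div_nonneg (ha z) (g.fromAmt_nonneg z)
  have hc₁ z : c z ≤ 1 := div_le_one_of_le₀ (hle z) (g.fromAmt_nonneg z)
  refine ⟨⟨fun u v p => c u * g.g u v p, fun u v p => mul_nonneg (hc₀ u) (g.nonneg u v p),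
    fun u v p hp => g.ends u v p (right_ne_zero_of_mul hp), fun w => (vertLoad_mono
      (fun u v p => mul_le_of_le_one_left (g.nonneg u v p) (hc₁ u)) w).trans (g.feas w)⟩,
    fun z => ?_⟩
  have hsum : ∑ v, pairFlow (fun u v p => c u * g.g u v p) z v = c z * g.fromAmt z := by
    simp only [pairFlow, NFlowToSet.fromAmt, Finset.mul_sum]
  refine hsum.trans ?_
  rcases eq_or_ne (g.fromAmt z) 0 with h0 | h0
  · rw [h0, mul_zero]
    exact le_antisymm (ha z) (h0 ▸ hle z)
  · exact div_mul_cancel₀ _ h0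

def NFlowToSet.symmetrize (h : NFlowToSet G cap S) (F : NDPFlow G cap M)
    (hF : ∀ z, h.fromAmt z ≤ F.marg z) : NFlowToSet G cap S where
  g := (6⁻¹ : ℝ) • (h.g + concatFlow (undirectedFlow F.f) (fun t => (F.marg t)⁻¹) h.g)
  nonneg u v p := mul_nonneg (by norm_num) <| add_nonneg (h.nonneg u v p) <|
    concatFlow_nonneg (fun t => inv_nonneg.mpr (F.marg_nonneg t))
      (undirectedFlow_nonneg F.nonneg) h.nonneg u v p
  ends u v p hp := by
    by_contra hv
    have hz : ∀ t q, h.g t v q = 0 := fun t q => by_contra (hv ∘ h.ends t v q)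
    simp [hz, concatFlow_eq_zero hz] at hp
  feas w := by
    have hconcat := vertLoad_concatFlow_le (fun t => inv_nonneg.mpr (F.marg_nonneg t))
      (undirectedFlow_nonneg F.nonneg) h.nonneg
      (fun t => by
        rw [sum_pairFlow_undirectedFlow]
        exact inv_mul_le_one_of_le₀ le_rfl (F.marg_nonneg t))
      (fun t => inv_mul_le_one_of_le₀ (hF t) (F.marg_nonneg t)) w
    rw [vertLoad_undirectedFlow] at hconcat
    rw [vertLoad_smul, vertLoad_add]
    linarith [h.feas w, F.feas w, (Nat.cast_nonneg (cap w) : (0 : ℝ) ≤ cap w)]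

variable (h : NFlowToSet G cap S) (F : NDPFlow G cap M) (hF : ∀ z, h.fromAmt z ≤ F.marg z)

lemma NFlowToSet.pairFlow_symmetrize (u v : V) :
    pairFlow (h.symmetrize F hF).g u v = 6⁻¹ * (pairFlow h.g u v
      + ∑ t, (F.marg t)⁻¹ * ((pairFlow F.f u t + pairFlow F.f t u) * pairFlow h.g t v)) := by
  simp only [NFlowToSet.symmetrize, pairFlow_smul, pairFlow_add, pairFlow_concatFlow,
    pairFlow_undirectedFlow]

lemma NFlowToSet.pairFlow_symmetrize_of_partner (hM : PairsMatching M) {s t : V}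
    (hst : (s, t) ∈ M ∨ (t, s) ∈ M) (v : V) :
    pairFlow (h.symmetrize F hF).g s v = 6⁻¹ * (pairFlow h.g s v + pairFlow h.g t v) := by
  have hx : pairFlow F.f s t + pairFlow F.f t s = F.marg t := by
    rw [NDPFlow.marg, hM.margOf_eq_of_partner F.pairFlow_eq_zero hst.symm, add_comm]
  rw [pairFlow_symmetrize, Finset.sum_congr rfl fun t' _ => by
    rw [hM.pairFlow_add_pairFlow_eq_ite F.pairFlow_eq_zero hst t', ite_mul, zero_mul, mul_ite,
      mul_zero], Finset.sum_ite_eq', if_pos (Finset.mem_univ t), hx]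
  rcases eq_or_ne (F.marg t) 0 with h0 | h0
  · have : pairFlow h.g t v = 0 := le_antisymm
      (((h.pairFlow_le_fromAmt t v).trans (hF t)).trans h0.le) (pairFlow_nonneg h.nonneg t v)
    rw [this, mul_zero, mul_zero]
  · rw [inv_mul_cancel_left₀ h0]

lemma NFlowToSet.fromAmt_symmetrize_of_partner (hM : PairsMatching M) {s t : V}
    (hst : (s, t) ∈ M ∨ (t, s) ∈ M) :
    (h.symmetrize F hF).fromAmt s = 6⁻¹ * (h.fromAmt s + h.fromAmt t) := by
  simp only [NFlowToSet.fromAmt, h.pairFlow_symmetrize_of_partner F hF hM hst,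
    ← Finset.mul_sum, Finset.sum_add_distrib]

end Flows

theorem symmetrize_flow_general
    {V : Type} [Fintype V] [DecidableEq V] (G : SimpleGraph V) (cap : V → ℕ)
    (M : Finset (V × V)) (hM : PairsMatching M)
    (F : NDPFlow G cap M)
    (S : Finset V) (α : ℝ) (hα : 1 ≤ α)
    (g : NFlowToSet G cap S)
    (hg : ∀ v : V, Terminal M v → F.marg v / α ≤ g.fromAmt v) :
    ∃ F₁ : NDPFlow G cap M,
      (∀ (u v : V) (p : G.Path u v), F₁.f u v p = F.f u v p / 3) ∧
      F₁.value = F.value / 3 ∧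
      ∃ g₁ : NFlowToSet G cap S,
        (∀ v : V, Terminal M v → F₁.marg v / α ≤ g₁.fromAmt v) ∧
        ∀ m ∈ M, ∀ v ∈ S, pairFlow g₁.g m.1 v = pairFlow g₁.g m.2 v := by
  obtain ⟨h, hh⟩ := g.exists_fromAmt_eq (fun z => F.marg z / α)
    (fun z => div_nonneg (F.marg_nonneg z) (by linarith)) fun z => by
      by_cases hz : Terminal M z
      · exact hg z hz
      · rw [NDPFlow.marg, margOf_eq_zero_of_not_terminal F.pairFlow_eq_zero hz, zero_div]
        exact g.fromAmt_nonneg z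
  have hF : ∀ z, h.fromAmt z ≤ F.marg z := fun z =>
    (hh z).trans_le (div_le_self (F.marg_nonneg z) hα)
  refine ⟨F.smul 3⁻¹ (by norm_num) (by norm_num), fun u v p => inv_mul_eq_div _ _, ?_,
    h.symmetrize F hF, ?_, fun m hm v _ => ?_⟩
  · rw [NDPFlow.value, NDPFlow.value, NDPFlow.smul, valueOf_smul, inv_mul_eq_div]
  · intro z hz
    obtain ⟨t, hzt⟩ := hz.exists_partner
    rw [h.fromAmt_symmetrize_of_partner F hF hM hzt, hh, hh, F.marg_eq_of_partner hM hzt.symm]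
    apply le_of_eq
    simp only [NDPFlow.marg, NDPFlow.smul, margOf_smul]
    ring
  · rw [h.pairFlow_symmetrize_of_partner F hF hM (Or.inl hm),
      h.pairFlow_symmetrize_of_partner F hF hM (Or.inr hm), add_comm]

/-- **Symmetrizing the flow `g`.**
Let `(G, M)` be a MaxNDP instance whose terminals all have degree `1` and capacity `1`,
`F = (f, x)` a feasible fractional solution with equal marginals on the endpoints of
each pair, and `g` a feasible flow routing at least `x(v)/α` from each terminal `v` to
`S`, where `α ≥ 1`.  Then there are a feasible fractional solution `F₁` with
`f₁ = f/3` (so `|f₁| = |f|/3`) and a feasible flow `g₁` to `S` routing at least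
`x₁(v)/α` from each terminal `v`, which moreover sends, for every pair `(s, t) ∈ M`
and every `v ∈ S`, the same amount of flow from `s` to `v` as from `t` to `v`. -/
theorem symmetrize_flow
    {V : Type} [Fintype V] [DecidableEq V] (G : SimpleGraph V) (cap : V → ℕ)
    (M : Finset (V × V)) (hM : PairsMatching M)
    (hterm : ∀ v : V, Terminal M v → G.degree v = 1 ∧ cap v = 1)
    (F : NDPFlow G cap M) (hbal : ∀ m ∈ M, F.marg m.1 = F.marg m.2)
    (S : Finset V) (α : ℝ) (hα : 1 ≤ α)
    (g : NFlowToSet G cap S)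
    (hg : ∀ v : V, Terminal M v → F.marg v / α ≤ g.fromAmt v) :
    ∃ F₁ : NDPFlow G cap M,
      (∀ (u v : V) (p : G.Path u v), F₁.f u v p = F.f u v p / 3) ∧
      F₁.value = F.value / 3 ∧
      ∃ g₁ : NFlowToSet G cap S,
        (∀ v : V, Terminal M v → F₁.marg v / α ≤ g₁.fromAmt v) ∧
        ∀ m ∈ M, ∀ v ∈ S, pairFlow g₁.g m.1 v = pairFlow g₁.g m.2 v :=
  symmetrize_flow_general G cap M hM F S α hα g hg

end Paper
end
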